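/- arXiv:1605.03474 — 5 statements merged into one kernel-verified Lean document; each statement's English description precedes it below -/
import Mathlib

section
/- Let x, y, g, h be integers with g dividing y and h dividing y. Let P be the set of primes p with v_p(g) ≠ v_p(h), and for each p in P let s_p = max(v_p(g), v_p(h)). Then gcd(x, y/g) = gcd(x, y/h) if and only if for every prime p in P one has v_p(x) ≤ v_p(y) - s_p. -/
lemma aux_val_div (p : ℕ) (hp : p.Prime) {y g : ℤ} (hy : y ≠ 0) (hg : g ≠ 0) (hgy : g ∣ y) :
    padicValInt p (y / g) = padicValInt p y - padicValInt p g ∧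
      padicValInt p g ≤ padicValInt p y := by
  obtain ⟨a, rfl⟩ := hgy
  have ha : a ≠ 0 := by rintro rfl; simp at hy
  haveI : Fact p.Prime := ⟨hp⟩
  rw [Int.mul_ediv_cancel_left _ hg, padicValInt.mul hg ha]
  omega

lemma aux_gcd_val (p : ℕ) (hp : p.Prime) {x a : ℤ} (hx : x ≠ 0) (ha : a ≠ 0) :
    padicValNat p (Int.gcd x a) = min (padicValInt p x) (padicValInt p a) := by
  rw [Int.gcd, ← Nat.factorization_def _ hp,
    Nat.factorization_gcd (by simpa using hx) (by simpa using ha), Finsupp.inf_apply]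
  simp [Nat.factorization_def _ hp, padicValInt]

theorem stmt_0 (x y g h : ℤ) (hx : x ≠ 0) (hy : y ≠ 0) (hg : g ≠ 0) (hh : h ≠ 0)
    (hgy : g ∣ y) (hhy : h ∣ y) :
    Int.gcd x (y / g) = Int.gcd x (y / h) ↔
      ∀ p : ℕ, p.Prime → padicValInt p g ≠ padicValInt p h →
        padicValInt p x ≤ padicValInt p y - max (padicValInt p g) (padicValInt p h) := by
  have hqg : y / g ≠ 0 := by intro H; apply hy; rw [← Int.ediv_mul_cancel hgy, H, zero_mul]
  have hqh : y / h ≠ 0 := by intro H; apply hy; rw [← Int.ediv_mul_cancel hhy, H, zero_mul]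
  have h1 : Int.gcd x (y / g) ≠ 0 := fun H => hx (Int.gcd_eq_zero_iff.mp H).1
  have h2 : Int.gcd x (y / h) ≠ 0 := fun H => hx (Int.gcd_eq_zero_iff.mp H).1
  rw [Nat.eq_iff_prime_padicValNat_eq _ _ h1 h2]
  constructor
  · intro H p hp hne
    have := H p hp
    rw [aux_gcd_val p hp hx hqg, aux_gcd_val p hp hx hqh] at this
    obtain ⟨e1, l1⟩ := aux_val_div p hp hy hg hgy
    obtain ⟨e2, l2⟩ := aux_val_div p hp hy hh hhy
    omega
  · intro H p hp
    rw [aux_gcd_val p hp hx hqg, aux_gcd_val p hp hx hqh]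
    obtain ⟨e1, l1⟩ := aux_val_div p hp hy hg hgy
    obtain ⟨e2, l2⟩ := aux_val_div p hp hy hh hhy
    by_cases hne : padicValInt p g = padicValInt p h
    · omega
    · have := H p hp hne; omega
end

section
/- Let p be a prime, t = v_p(b) ≥ 1, k a positive integer with ℓ = v_p(k), and r an integer with 2 ≤ r ≤ k. Assume p is odd, or p = 2 and t ≥ 2, or ℓ = 0. Then p^{ℓ+t+1} divides C(k, r) · b^r. -/
/-!
Write `v = v_p(r)`. The identity `k · C(k-1, r-1) = r · C(k, r)` gives `ℓ ≤ v_p(C(k, r)) + v`, and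
`p^{r t}` divides `b^r`, so it suffices that `v + t + 1 ≤ r t`. This holds because `p^v ≤ r` makes
`v` small compared to `r`: `v + 2 ≤ r` when `p ≥ 3`, and `v + 1 ≤ r` always, which suffices when
`t ≥ 2`. If `ℓ = 0`, the bound `t + 1 ≤ 2 t ≤ r t` is enough.
-/

lemma padicValNat_le_padicValNat_choose_add (p : ℕ) [Fact p.Prime] {k r : ℕ}
    (hr : 0 < r) (hrk : r ≤ k) :
    padicValNat p k ≤ padicValNat p (k.choose r) + padicValNat p r := by
  obtain ⟨n, rfl⟩ : ∃ n, r = n + 1 := ⟨r - 1, by omega⟩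
  obtain ⟨m, rfl⟩ : ∃ m, k = m + 1 := ⟨k - 1, by omega⟩
  have h := congrArg (padicValNat p) (Nat.add_one_mul_choose_eq m n)
  rw [padicValNat.mul (by omega) (Nat.choose_pos (by omega)).ne',
    padicValNat.mul (Nat.choose_pos hrk).ne' (by omega)] at h
  omega

lemma padicValNat_lt_self {p r : ℕ} (hp : 1 < p) (hr : r ≠ 0) : padicValNat p r < r :=
  (Nat.lt_pow_self hp).trans_le (Nat.le_of_dvd (Nat.pos_of_ne_zero hr) pow_padicValNat_dvd)

lemma padicValNat_add_two_le {p r : ℕ} (hp : 3 ≤ p) (hr : 2 ≤ r) : padicValNat p r + 2 ≤ r := by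
  have hbernoulli : 1 + padicValNat p r * 2 ≤ 3 ^ padicValNat p r :=
    one_add_le_pow_of_two_add_nonneg (by norm_num) _
  have hpow : 3 ^ padicValNat p r ≤ r :=
    (Nat.pow_le_pow_left hp _).trans (Nat.le_of_dvd (by omega) pow_padicValNat_dvd)
  omega

lemma padicValNat_add_add_one_le_mul {p r t : ℕ} (hp : 1 < p) (hr : 2 ≤ r) (ht : 1 ≤ t)
    (h : 3 ≤ p ∨ 2 ≤ t) : padicValNat p r + t + 1 ≤ r * t := by
  rcases h with hp3 | ht2
  · have := padicValNat_add_two_le hp3 hr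
    nlinarith
  · have := padicValNat_lt_self hp (by omega : r ≠ 0)
    nlinarith

theorem stmt_7_general (p : ℕ) (hp : p.Prime) (b : ℤ)
    (t : ℕ) (ht : t = padicValInt p b) (ht1 : 1 ≤ t)
    (k : ℕ) (ℓ : ℕ) (hℓ : ℓ = padicValNat p k)
    (r : ℕ) (hr2 : 2 ≤ r) (hrk : r ≤ k)
    (hcase : Odd p ∨ (p = 2 ∧ 2 ≤ t) ∨ ℓ = 0) :
    (p : ℤ) ^ (ℓ + t + 1) ∣ (Nat.choose k r : ℤ) * b ^ r := by
  have := Fact.mk hp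
  have hdvd : (p : ℤ) ^ (padicValNat p (k.choose r) + r * t) ∣ (k.choose r : ℤ) * b ^ r := by
    rw [pow_add, mul_comm r, pow_mul]
    exact mul_dvd_mul (Int.natCast_dvd_natCast.mpr pow_padicValNat_dvd)
      (pow_dvd_pow_of_dvd (ht ▸ padicValInt_dvd b) r)
  refine (pow_dvd_pow _ ?_).trans hdvd
  have hchoose := padicValNat_le_padicValNat_choose_add p (by omega) hrk
  rcases hcase with hodd | ⟨-, ht2⟩ | hℓ0
  · have hp3 : 3 ≤ p := by
      have := hp.two_le
      have := Nat.odd_iff.mp hodd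
      omega
    have := padicValNat_add_add_one_le_mul hp.one_lt hr2 ht1 (.inl hp3)
    omega
  · have := padicValNat_add_add_one_le_mul hp.one_lt hr2 ht1 (.inr ht2)
    omega
  · have : 2 * t ≤ r * t := Nat.mul_le_mul_right t hr2
    omega

theorem stmt_7 (p : ℕ) (hp : p.Prime) (b : ℤ) (hb : b ≠ 0)
    (t : ℕ) (ht : t = padicValInt p b) (ht1 : 1 ≤ t)
    (k : ℕ) (hk : 0 < k) (ℓ : ℕ) (hℓ : ℓ = padicValNat p k)
    (r : ℕ) (hr2 : 2 ≤ r) (hrk : r ≤ k)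
    (hcase : Odd p ∨ (p = 2 ∧ 2 ≤ t) ∨ ℓ = 0) :
    (p : ℤ) ^ (ℓ + t + 1) ∣ (Nat.choose k r : ℤ) * b ^ r :=
  stmt_7_general p hp b t ht ht1 k ℓ hℓ r hr2 hrk hcase
end

section
/- Let δ be an algebraic integer of degree 2, a, b integers, p a prime with p ∣ b, p ∤ a, t = v_p(b), k a positive integer with ℓ = v_p(k), and write (a + bδ)^k = a_k + b_k δ. Assume p is odd, or p = 2 and t ≥ 2, or ℓ = 0. Then v_p(b_k) = ℓ + t. -/
/-!
Expanding binomially, `b_k = ∑ C(k,i) a^(k-i) b^i c_i`, where `δ^i = c'_i + c_i δ`, so `c_0 = 0`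
and `c_1 = 1`. The term `i = 1` is `k a^(k-1) b`, of valuation exactly `ℓ + t`. For `i ≥ 2`,
`i C(k,i) = k C(k-1,i-1)` gives `v_p(C(k,i)) ≥ ℓ - v_p(i)`, while `b^i` contributes `i t`; since
`p^(v_p(i)) ≤ i`, we get `v_p(i) < (i-1) t` unless `p = 2` and `t = 1`, a case where `ℓ = 0`
is assumed. Either way all the terms with `i ≥ 2` are divisible by `p^(ℓ+t+1)`.
-/

open Finset

namespace QuadraticPow

variable {p : ℕ} [hp : Fact p.Prime]

lemma padicValInt_add_eq_of_pow_dvd {x y : ℤ} (hx : x ≠ 0)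
    (hy : (p : ℤ) ^ (padicValInt p x + 1) ∣ y) :
    padicValInt p (x + y) = padicValInt p x := by
  have hxy : ¬ (p : ℤ) ^ (padicValInt p x + 1) ∣ x + y := fun h ↦ by
    have := (padicValInt_dvd_iff _ x).mp ((dvd_add_left hy).mp h)
    omega
  have hle := (padicValInt_dvd_iff _ (x + y)).mp
    (dvd_add (padicValInt_dvd x) ((pow_dvd_pow _ (Nat.le_succ _)).trans hy))
  rw [padicValInt_dvd_iff, not_or] at hxy
  omega

lemma pow_sub_padicValNat_dvd_choose {k i : ℕ} (hi : 0 < i) (hik : i ≤ k) :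
    p ^ (padicValNat p k - padicValNat p i) ∣ k.choose i := by
  obtain ⟨n, rfl⟩ : ∃ n, k = n + 1 := ⟨k - 1, by omega⟩
  obtain ⟨j, rfl⟩ : ∃ j, i = j + 1 := ⟨i - 1, by omega⟩
  have hval := congrArg (padicValNat p) (Nat.add_one_mul_choose_eq n j)
  rw [padicValNat.mul n.add_one_ne_zero (Nat.choose_pos (by omega)).ne',
    padicValNat.mul (Nat.choose_pos hik).ne' j.add_one_ne_zero] at hval
  exact (pow_dvd_pow p (by omega)).trans pow_padicValNat_dvd

lemma padicValNat_lt_sub_one_mul {i t : ℕ} (hi : 2 ≤ i) (ht : 1 ≤ t) (h : 3 ≤ p ∨ 2 ≤ t) :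
    padicValNat p i < (i - 1) * t := by
  have hle : p * padicValNat p i ≤ i :=
    (Nat.mul_le_pow hp.out.ne_one _).trans (Nat.le_of_dvd (by omega) pow_padicValNat_dvd)
  obtain ⟨j, rfl⟩ : ∃ j, i = j + 2 := ⟨i - 2, by omega⟩
  have hp2 := hp.out.two_le
  rw [show j + 2 - 1 = j + 1 by omega]
  set s := padicValNat p (j + 2)
  rcases h with h | h
  · have := Nat.mul_le_mul_right s h
    have := Nat.le_mul_of_pos_right (j + 1) ht
    omega
  · have := Nat.mul_le_mul_right s hp2
    have := Nat.mul_le_mul_left (j + 1) h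
    omega

lemma pow_dvd_choose_mul_pow {b : ℤ} {k i : ℕ} (hi : 2 ≤ i) (hik : i ≤ k)
    (ht : 1 ≤ padicValInt p b)
    (hcase : 3 ≤ p ∨ 2 ≤ padicValInt p b ∨ padicValNat p k = 0) :
    (p : ℤ) ^ (padicValNat p k + padicValInt p b + 1) ∣ k.choose i * b ^ i := by
  set t := padicValInt p b
  set s := padicValNat p i
  have hchoose : (p : ℤ) ^ (padicValNat p k - s) ∣ k.choose i := by
    exact_mod_cast pow_sub_padicValNat_dvd_choose (by omega) hik
  have hbi : (p : ℤ) ^ (i * t) ∣ b ^ i := by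
    rw [mul_comm, pow_mul]
    exact pow_dvd_pow_of_dvd (padicValInt_dvd b) i
  have hit : i * t = (i - 1) * t + t := by
    rw [← Nat.succ_mul, Nat.succ_eq_add_one, Nat.sub_add_cancel (by omega)]
  have hexp : padicValNat p k + t + 1 ≤ (padicValNat p k - s) + i * t := by
    rcases hcase with h | h | h
    · have := padicValNat_lt_sub_one_mul hi ht (.inl h)
      omega
    · have := padicValNat_lt_sub_one_mul (p := p) hi ht (.inr h)
      omega
    · have := Nat.le_mul_of_pos_right (i - 1) ht
      omega
  calc (p : ℤ) ^ (padicValNat p k + t + 1)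
      ∣ (p : ℤ) ^ ((padicValNat p k - s) + i * t) := pow_dvd_pow _ hexp
    _ ∣ k.choose i * b ^ i := by
      rw [pow_add]
      exact mul_dvd_mul hchoose hbi

theorem padicValInt_sum_pow_mul_pow_mul_choose {a b : ℤ} {k : ℕ} (f : ℕ → ℤ) (hf0 : f 0 = 0)
    (hf1 : f 1 = 1) (hpa : ¬ (p : ℤ) ∣ a) (hpb : (p : ℤ) ∣ b) (hb : b ≠ 0) (hk : 0 < k)
    (hcase : 3 ≤ p ∨ 2 ≤ padicValInt p b ∨ padicValNat p k = 0) :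
    padicValInt p (∑ i ∈ range (k + 1), b ^ i * a ^ (k - i) * k.choose i * f i) =
      padicValNat p k + padicValInt p b := by
  have ht : 1 ≤ padicValInt p b := by
    have := (padicValInt_dvd_iff 1 b).mp (by simpa using hpb)
    tauto
  obtain ⟨n, rfl⟩ : ∃ n, k = n + 1 := ⟨k - 1, by omega⟩
  have hpa' : ¬ (p : ℤ) ∣ a ^ n := fun h ↦
    hpa ((Nat.prime_iff_prime_int.mp hp.out).dvd_of_dvd_pow h)
  have ha : a ^ n ≠ 0 := fun h ↦ hpa' (h ▸ dvd_zero _)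
  have hlead : padicValInt p (b * a ^ n * (n + 1 : ℕ)) =
      padicValNat p (n + 1) + padicValInt p b := by
    rw [padicValInt.mul (mul_ne_zero hb ha) (by omega), padicValInt.mul hb ha,
      padicValInt.eq_zero_of_not_dvd hpa', padicValInt.of_nat]
    ring
  have htail : (p : ℤ) ^ (padicValNat p (n + 1) + padicValInt p b + 1) ∣
      ∑ i ∈ range n, b ^ (i + 2) * a ^ (n + 1 - (i + 2)) * (n + 1).choose (i + 2) * f (i + 2) := by
    refine dvd_sum fun i hi ↦ ?_
    have hin := mem_range.mp hi
    calc _ ∣ ((n + 1).choose (i + 2) : ℤ) * b ^ (i + 2) :=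
          pow_dvd_choose_mul_pow (by omega) (by omega) ht hcase
      _ ∣ _ := Dvd.intro (a ^ (n + 1 - (i + 2)) * f (i + 2)) (by ring)
  rw [sum_range_succ', sum_range_succ', hf0, hf1]
  simp only [zero_add, pow_one, Nat.choose_one_right, mul_one, mul_zero, add_zero,
    Nat.add_sub_cancel]
  rw [add_comm, padicValInt_add_eq_of_pow_dvd (mul_ne_zero (mul_ne_zero hb ha) (by omega))
    (hlead ▸ htail), hlead]

def quadPowCoeff (u v : ℤ) : ℕ → ℤ × ℤ
  | 0 => (1, 0)
  | n + 1 => (u * (quadPowCoeff u v n).2, (quadPowCoeff u v n).1 + v * (quadPowCoeff u v n).2)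

section Ring

variable {R : Type*} [CommRing R] {δ : R} {u v : ℤ}

lemma pow_eq_quadPowCoeff (h2 : δ ^ 2 = u + v * δ) (n : ℕ) :
    δ ^ n = (quadPowCoeff u v n).1 + (quadPowCoeff u v n).2 * δ := by
  induction n with
  | zero => simp [quadPowCoeff]
  | succ n ih =>
    simp only [quadPowCoeff, pow_succ, ih, Int.cast_add, Int.cast_mul]
    linear_combination ((quadPowCoeff u v n).2 : R) * h2

lemma add_mul_pow_eq (h2 : δ ^ 2 = u + v * δ) (a b : ℤ) (k : ℕ) :
    ((a : R) + b * δ) ^ k =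
      ((∑ i ∈ range (k + 1), b ^ i * a ^ (k - i) * k.choose i * (quadPowCoeff u v i).1 : ℤ) : R) +
      ((∑ i ∈ range (k + 1), b ^ i * a ^ (k - i) * k.choose i * (quadPowCoeff u v i).2 : ℤ) : R) *
        δ := by
  rw [add_comm (a : R), add_pow]
  push_cast
  rw [sum_mul, ← sum_add_distrib]
  refine sum_congr rfl fun i _ ↦ ?_
  rw [mul_pow, pow_eq_quadPowCoeff h2 i]
  ring

end Ring

end QuadraticPow

open QuadraticPow in
theorem stmt_9 {R : Type*} [CommRing R] (δ : R) (u v : ℤ)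
    (h2 : δ ^ 2 = (u : R) + (v : R) * δ)
    (hindep : ∀ m n m_ n_ : ℤ, (m : R) + (n : R) * δ = (m_ : R) + (n_ : R) * δ → m = m_ ∧ n = n_)
    (a b : ℤ) (p : ℕ) (hp : p.Prime) (hpb : (p : ℤ) ∣ b) (hpa : ¬ (p : ℤ) ∣ a) (hb : b ≠ 0)
    (t : ℕ) (ht : t = padicValInt p b)
    (k : ℕ) (hk : 0 < k) (ℓ : ℕ) (hℓ : ℓ = padicValNat p k)
    (a_k b_k : ℤ) (hpow : ((a : R) + (b : R) * δ) ^ k = (a_k : R) + (b_k : R) * δ)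
    (hcase : Odd p ∨ (p = 2 ∧ 2 ≤ t) ∨ ℓ = 0) :
    padicValInt p b_k = ℓ + t := by
  have : Fact p.Prime := ⟨hp⟩
  have hbk := (hindep _ _ _ _ (hpow.symm.trans (add_mul_pow_eq h2 a b k))).2
  subst ht hℓ hbk
  refine padicValInt_sum_pow_mul_pow_mul_choose _ rfl (by simp [quadPowCoeff]) hpa hpb hb hk ?_
  rcases hcase with ⟨m, rfl⟩ | ⟨-, h⟩ | h
  · have := hp.two_le
    exact .inl (by omega)
  · exact .inr (.inl h)
  · exact .inr (.inr h)
end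

section
/- Let δ be an algebraic integer of degree 2, a, b integers, p a prime with p ∣ b, p ∤ a, t = v_p(b), k a positive integer with ℓ = v_p(k), and write (a + bδ)^k = a_k + b_k δ. Assume p is odd, or p = 2 and t ≥ 2, or ℓ = 0. If v_p(a^k - 1) ≤ ℓ + t, then v_p(a_k - 1) = v_p(a^k - 1). -/
/-!
Expand `(a + b δ) ^ k` binomially and write each `δ ^ i` in the basis `1, δ`. The terms of
degree `0` and `1` contribute `a ^ k` and a multiple of `δ`, so `a_k - a ^ k` is an integer
combination of the numbers `C(k, i) b ^ i` with `i ≥ 2`. Since `v_p(C(k, i)) ≥ ℓ - v_p(i)` and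
`p ^ v_p(i) ≤ i`, each of these is divisible by `p ^ (ℓ + t + 1)` in the stated cases. Hence
`a_k - 1 = (a ^ k - 1) + (a_k - a ^ k)` with the second summand of strictly larger valuation.
-/

open Finset Submodule

section QuadraticCoordinates

variable {R : Type*} [CommRing R] {δ : R} {u v : ℤ}

lemma mul_mem_span_one_self (h2 : δ ^ 2 = (u : R) + (v : R) * δ) {x : R}
    (hx : x ∈ span ℤ ({1, δ} : Set R)) : δ * x ∈ span ℤ ({1, δ} : Set R) := by
  obtain ⟨c, d, rfl⟩ := mem_span_pair.1 hx
  refine mem_span_pair.2 ⟨d * u, c + d * v, ?_⟩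
  simp only [zsmul_eq_mul]
  push_cast
  linear_combination -(d : R) * h2

lemma pow_mem_span_one_self (h2 : δ ^ 2 = (u : R) + (v : R) * δ) (i : ℕ) :
    δ ^ i ∈ span ℤ ({1, δ} : Set R) := by
  induction i with
  | zero => exact pow_zero δ ▸ subset_span (Set.mem_insert _ _)
  | succ i ih => exact pow_succ' δ i ▸ mul_mem_span_one_self h2 ih

lemma smul_mem_span_mul_of_dvd {q c : ℤ} (hqc : q ∣ c) {x : R}
    (hx : x ∈ span ℤ ({1, δ} : Set R)) : c • x ∈ span ℤ ({(q : R), q * δ} : Set R) := by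
  obtain ⟨r, rfl⟩ := hqc
  obtain ⟨m, n, rfl⟩ := mem_span_pair.1 hx
  refine mem_span_pair.2 ⟨r * m, r * n, ?_⟩
  simp only [zsmul_eq_mul]
  push_cast
  ring

lemma exists_add_mul_pow_eq (h2 : δ ^ 2 = (u : R) + (v : R) * δ) (a b q : ℤ) (k : ℕ)
    (hq : ∀ i, 2 ≤ i → i ≤ k → q ∣ k.choose i * b ^ i) :
    ∃ m n : ℤ, ((a : R) + b * δ) ^ k =
      ((a ^ k + q * m : ℤ) : R) + ((k * a ^ (k - 1) * b + q * n : ℤ) : R) * δ := by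
  rcases k with _ | k
  · exact ⟨0, 0, by simp⟩
  have htail : ∑ i ∈ range k, (b * δ) ^ (i + 2) * (a : R) ^ (k + 1 - (i + 2)) *
      ((k + 1).choose (i + 2) : R) ∈ span ℤ ({(q : R), q * δ} : Set R) := by
    refine sum_mem fun i hi => ?_
    have hterm : (b * δ) ^ (i + 2) * (a : R) ^ (k + 1 - (i + 2)) * ((k + 1).choose (i + 2) : R) =
        ((k + 1).choose (i + 2) * b ^ (i + 2) : ℤ) •
          (a ^ (k + 1 - (i + 2)) • δ ^ (i + 2)) := by
      simp only [zsmul_eq_mul]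
      push_cast
      ring
    rw [hterm]
    have hik : i + 2 ≤ k + 1 := by have := mem_range.1 hi; omega
    exact smul_mem_span_mul_of_dvd (hq _ (by omega) hik)
      (smul_mem _ _ (pow_mem_span_one_self h2 _))
  obtain ⟨m, n, hmn⟩ := mem_span_pair.1 htail
  refine ⟨m, n, ?_⟩
  rw [add_comm (a : R), add_pow, sum_range_succ', sum_range_succ', ← hmn]
  simp only [zsmul_eq_mul]
  push_cast
  simp only [Nat.choose_zero_right, Nat.choose_one_right]
  push_cast
  ring

end QuadraticCoordinates

lemma pow_sub_padicValNat_dvd_choose {p : ℕ} [hp : Fact p.Prime] {k i : ℕ} (hi : i ≠ 0)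
    (hik : i ≤ k) : p ^ (padicValNat p k - padicValNat p i) ∣ k.choose i := by
  have h := Nat.factorization_le_factorization_choose_add (p := p) hik hi
  simp only [Nat.factorization_def _ hp.out] at h
  exact (Nat.pow_dvd_pow p (by omega)).trans
    (Nat.factorization_def (k.choose i) hp.out ▸ Nat.ordProj_dvd _ p)

lemma add_add_one_le_mul_of_pow_le {p t i m : ℕ} (hp : 2 ≤ p) (ht : 1 ≤ t) (hi : 2 ≤ i)
    (hpm : p ^ m ≤ i) (h : 3 ≤ p ∨ 2 ≤ t) : m + t + 1 ≤ i * t := by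
  have hpi : p * m ≤ i := (Nat.mul_le_pow (by omega) m).trans hpm
  rcases h with hp3 | ht2 <;> nlinarith

lemma pow_dvd_choose_mul_pow {p : ℕ} [hp : Fact p.Prime] {t k i : ℕ} {b : ℤ}
    (hb : (p : ℤ) ^ t ∣ b) (ht : 1 ≤ t) (hi : 2 ≤ i) (hik : i ≤ k)
    (h : 3 ≤ p ∨ 2 ≤ t ∨ padicValNat p k = 0) :
    (p : ℤ) ^ (padicValNat p k + t + 1) ∣ k.choose i * b ^ i := by
  have hexp : padicValNat p k + t + 1 ≤ (padicValNat p k - padicValNat p i) + i * t := by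
    by_cases hk : padicValNat p k = 0
    · rw [hk]
      nlinarith
    · have hpi : p ^ padicValNat p i ≤ i := Nat.le_of_dvd (by omega) pow_padicValNat_dvd
      have := add_add_one_le_mul_of_pow_le hp.out.two_le ht hi hpi (by tauto)
      omega
  calc (p : ℤ) ^ (padicValNat p k + t + 1)
      ∣ (p : ℤ) ^ (padicValNat p k - padicValNat p i) * ((p : ℤ) ^ t) ^ i := by
        rw [← pow_mul, ← pow_add, mul_comm t]; exact pow_dvd_pow _ hexp
    _ ∣ k.choose i * b ^ i := mul_dvd_mul
        (mod_cast pow_sub_padicValNat_dvd_choose (by omega) hik) (pow_dvd_pow_of_dvd hb i)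

lemma padicValInt_add_eq_of_pow_dvd {p : ℕ} [Fact p.Prime] {x y : ℤ} (hx : x ≠ 0)
    (hy : (p : ℤ) ^ (padicValInt p x + 1) ∣ y) : padicValInt p (x + y) = padicValInt p x := by
  have hlow := (padicValInt_dvd_iff (padicValInt p x) (x + y)).1
    (dvd_add (padicValInt_dvd x) ((pow_dvd_pow _ (Nat.le_succ _)).trans hy))
  have hhigh : ¬ (p : ℤ) ^ (padicValInt p x + 1) ∣ x + y := fun h => by
    have := (padicValInt_dvd_iff _ x).1 ((dvd_add_left hy).1 h)
    omega
  rw [padicValInt_dvd_iff] at hhigh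
  omega

theorem stmt_10_general {R : Type*} [CommRing R] (δ : R) (u v : ℤ)
    (h2 : δ ^ 2 = (u : R) + (v : R) * δ)
    (hindep : ∀ m n m_ n_ : ℤ, (m : R) + (n : R) * δ = (m_ : R) + (n_ : R) * δ → m = m_ ∧ n = n_)
    (a b : ℤ) (p : ℕ) (hp : p.Prime) (hpb : (p : ℤ) ∣ b) (hb : b ≠ 0)
    (t : ℕ) (ht : t = padicValInt p b)
    (k : ℕ) (ℓ : ℕ) (hℓ : ℓ = padicValNat p k)
    (a_k b_k : ℤ) (hpow : ((a : R) + (b : R) * δ) ^ k = (a_k : R) + (b_k : R) * δ)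
    (hcase : Odd p ∨ (p = 2 ∧ 2 ≤ t) ∨ ℓ = 0)
    (hne : a ^ k ≠ 1) (hle : padicValInt p (a ^ k - 1) ≤ ℓ + t) :
    padicValInt p (a_k - 1) = padicValInt p (a ^ k - 1) := by
  have := Fact.mk hp
  subst ht hℓ
  have ht : 1 ≤ padicValInt p b := by
    simpa [hb] using (padicValInt_dvd_iff 1 b).1 (by simpa using hpb)
  have hcase' := hcase.imp hp.odd_iff.1 (Or.imp_left And.right)
  obtain ⟨m, n, hmn⟩ := exists_add_mul_pow_eq h2 a b
    (p ^ (padicValNat p k + padicValInt p b + 1)) k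
    fun i hi hik => pow_dvd_choose_mul_pow (padicValInt_dvd b) ht hi hik hcase'
  obtain ⟨rfl, -⟩ := hindep _ _ _ _ (hpow.symm.trans hmn)
  rw [add_sub_right_comm, padicValInt_add_eq_of_pow_dvd (sub_ne_zero.2 hne)]
  exact dvd_mul_of_dvd_left (pow_dvd_pow _ (by omega)) _

theorem stmt_10 {R : Type*} [CommRing R] (δ : R) (u v : ℤ)
    (h2 : δ ^ 2 = (u : R) + (v : R) * δ)
    (hindep : ∀ m n m_ n_ : ℤ, (m : R) + (n : R) * δ = (m_ : R) + (n_ : R) * δ → m = m_ ∧ n = n_)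
    (a b : ℤ) (p : ℕ) (hp : p.Prime) (hpb : (p : ℤ) ∣ b) (hpa : ¬ (p : ℤ) ∣ a) (hb : b ≠ 0)
    (t : ℕ) (ht : t = padicValInt p b)
    (k : ℕ) (hk : 0 < k) (ℓ : ℕ) (hℓ : ℓ = padicValNat p k)
    (a_k b_k : ℤ) (hpow : ((a : R) + (b : R) * δ) ^ k = (a_k : R) + (b_k : R) * δ)
    (hcase : Odd p ∨ (p = 2 ∧ 2 ≤ t) ∨ ℓ = 0)
    (hne : a ^ k ≠ 1) (hle : padicValInt p (a ^ k - 1) ≤ ℓ + t) :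
    padicValInt p (a_k - 1) = padicValInt p (a ^ k - 1) :=
  stmt_10_general δ u v h2 hindep a b p hp hpb hb t ht k ℓ hℓ a_k b_k hpow hcase hne hle
end

section
/- Let δ be an algebraic integer of degree 2, let a, b, g be integers with 2 ∣ g ∣ b, a odd, v_2(b) ≥ 2, and let e be the multiplicative order of a modulo 4 (so e = 1 if a ≡ 1 mod 4, e = 2 if a ≡ 3 mod 4). Let k be a positive integer and write (a + bδ)^k = a_k + b_k δ. Then v_2(a_k - 1) > v_2(b_k) - v_2(g) if and only if (e ∣ k and v_2(a^e - 1) - v_2(e) > v_2(b) - v_2(g)) or (v_2(k) = 0 and v_2(b/g) = 0). -/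
private lemma val2_of_eq {x c : ℤ} {n : ℕ} (hc : Odd c) (h : x = 2^n * c) :
    padicValInt 2 x = n ∧ x ≠ 0 := by
  have hc0 : c ≠ 0 := by rintro rfl; simp at hc
  have hx0 : x ≠ 0 := by simp [h, hc0]
  constructor
  · rw [h, padicValInt.mul (by positivity) hc0]
    have h1 : padicValInt 2 ((2:ℤ)^n) = n := by
      rw [show ((2:ℤ)^n) = ((2^n : ℕ) : ℤ) by push_cast; ring, padicValInt.of_nat,
        padicValNat.prime_pow]
    have h2 : padicValInt 2 c = 0 := padicValInt.eq_zero_of_not_dvd (by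
      show ¬ ((2:ℕ):ℤ) ∣ c
      push_cast
      rw [Int.two_dvd_ne_zero]; exact Int.odd_iff.mp hc)
    omega
  · exact hx0

private lemma exists_odd_part (x : ℤ) (hx : x ≠ 0) :
    ∃ c, Odd c ∧ x = 2^(padicValInt 2 x) * c := by
  obtain ⟨c, hc⟩ := padicValInt_dvd (p := 2) x
  push_cast at hc
  refine ⟨c, ?_, hc⟩
  rw [Int.not_even_iff_odd.symm]
  rintro ⟨d, hd⟩
  have : ((2:ℕ):ℤ) ^ (padicValInt 2 x + 1) ∣ x := by
    refine ⟨d, ?_⟩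
    conv_lhs => rw [hc, hd]
    push_cast; ring
  rw [padicValInt_dvd_iff] at this
  omega

private lemma ge_val_of_dvd {x : ℤ} {n : ℕ} (hx : x ≠ 0) (h : (2:ℤ)^n ∣ x) :
    n ≤ padicValInt 2 x := by
  have h' : ((2:ℕ):ℤ)^n ∣ x := by push_cast; exact h
  rw [padicValInt_dvd_iff] at h'; tauto

private lemma val_combine {x c z : ℤ} {M N : ℕ} (hc : Odd c)
    (hx : x = 2^M * c + 2^N * z) (hMN : M < N) : padicValInt 2 x = M := by
  obtain ⟨D, rfl⟩ : ∃ D, N = M + (D+1) := ⟨N-M-1, by omega⟩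
  have h1 : x = 2^M * (c + 2^(D+1) * z) := by
    rw [hx, pow_add]; ring
  exact (val2_of_eq (Odd.add_even hc ⟨2^D*z, by ring⟩) h1).1

private lemma odd_int_cast_zmod2 {a : ℤ} (ha : Odd a) : (a : ZMod 2) = 1 := by
  obtain ⟨m, rfl⟩ := ha
  push_cast
  have : (2 : ZMod 2) = 0 := by decide
  rw [this]; ring

private lemma odd_geom_sum {a : ℤ} (ha : Odd a) {k : ℕ} (hk : Odd k) :
    Odd (∑ i ∈ Finset.range k, a ^ i) := by
  rw [← Int.not_even_iff_odd]
  intro hev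
  have h0 : ((∑ i ∈ Finset.range k, a ^ i : ℤ) : ZMod 2) = 0 := by
    obtain ⟨d, hd⟩ := hev
    rw [hd]; push_cast
    have : (2 : ZMod 2) = 0 := by decide
    linear_combination (d : ZMod 2) * this
  rw [Int.cast_sum] at h0
  simp only [Int.cast_pow, odd_int_cast_zmod2 ha, one_pow, Finset.sum_const,
    Finset.card_range, nsmul_eq_mul, mul_one] at h0
  have : ((k : ℕ) : ZMod 2) = 1 := by
    obtain ⟨m, rfl⟩ := hk
    push_cast
    have : (2 : ZMod 2) = 0 := by decide
    rw [this]; ring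
  rw [this] at h0
  exact one_ne_zero h0

private lemma order3 : orderOf (3 : ZMod 4) = 2 :=
  orderOf_eq_prime (by decide) (by decide)

private lemma int_cast_zmod4 {a : ℤ} (r : ℤ) (h : a % 4 = r) :
    (a : ZMod 4) = (r : ZMod 4) := by
  rw [ZMod.intCast_eq_intCast_iff']
  push_cast
  omega

private lemma val2_two_mul {m : ℕ} (hm : m ≠ 0) :
    padicValNat 2 (2 * m) = padicValNat 2 m + 1 := by
  rw [padicValNat.mul (by norm_num) hm, padicValNat.self (by norm_num)]
  omega

private lemma val2_odd {k : ℕ} (hk : Odd k) : padicValNat 2 k = 0 := by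
  apply padicValNat.eq_zero_of_not_dvd
  rintro ⟨d, hd⟩
  rw [Nat.odd_iff] at hk
  omega

private lemma pow_one_lte (a c0 : ℤ) (V : ℕ) (hc0 : Odd c0) (hV : 2 ≤ V)
    (h : a - 1 = 2^V * c0) :
    ∀ k, 1 ≤ k → ∃ c, Odd c ∧ a^k - 1 = 2^(V + padicValNat 2 k) * c := by
  have ha : Odd a := by
    obtain ⟨V', rfl⟩ : ∃ V', V = V'+1 := ⟨V-1, by omega⟩
    refine ⟨2^V' * c0, ?_⟩
    rw [pow_succ] at h; linarith
  intro k
  induction k using Nat.strong_induction_on with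
  | _ k IH =>
    intro hk
    rcases Nat.even_or_odd k with hke | hko
    · obtain ⟨m, rfl⟩ := hke
      have hm : 1 ≤ m := by omega
      obtain ⟨c, hc, hac⟩ := IH m (by omega) hm
      obtain ⟨W', hW'⟩ : ∃ W', V + padicValNat 2 m = (W' + 1) + 1 :=
        ⟨V + padicValNat 2 m - 2, by omega⟩
      have hv : padicValNat 2 (m + m) = padicValNat 2 m + 1 := by
        rw [show m + m = 2 * m from by ring, val2_two_mul (by omega)]
      refine ⟨c * (2 ^ (W'+1) * c + 1), Odd.mul hc ⟨2^W' * c, by ring⟩, ?_⟩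
      · rw [hW'] at hac
        have ham : a ^ m = 2 ^ (W' + 1 + 1) * c + 1 := by linarith [hac]
        rw [show V + padicValNat 2 (m+m) = W' + 1 + 1 + 1 from by omega, pow_add, ham]
        ring
    · have hv : padicValNat 2 k = 0 := val2_odd hko
      have hg := geom_sum_mul (a : ℤ) k
      refine ⟨(∑ i ∈ Finset.range k, a ^ i) * c0, Odd.mul (odd_geom_sum ha hko) hc0, ?_⟩
      rw [hv, ← hg, h]
      ring

private def sq2 (a b u v : ℤ) : ℕ → ℤ × ℤ
  | 0 => (1, 0)
  | n+1 =>
    let P := sq2 a b u v n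
    (P.1 * a + P.2 * b * u, P.1 * b + P.2 * a + P.2 * b * v)

private lemma sq2_spec {R : Type*} [CommRing R] (δ : R) (u v : ℤ)
    (h2 : δ ^ 2 = (u : R) + (v : R) * δ) (a b : ℤ) (n : ℕ) :
    ((a : R) + (b : R) * δ) ^ n = ((sq2 a b u v n).1 : R) + ((sq2 a b u v n).2 : R) * δ := by
  induction n with
  | zero => simp [sq2]
  | succ n ih =>
    rw [pow_succ, ih, sq2]
    push_cast
    linear_combination (((sq2 a b u v n).2 : R) * (b : R)) * h2

private lemma sq2_add (a b u v : ℤ) (m n : ℕ) :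
    (sq2 a b u v (m+n)).1 = (sq2 a b u v m).1 * (sq2 a b u v n).1
        + u * (sq2 a b u v m).2 * (sq2 a b u v n).2 ∧
    (sq2 a b u v (m+n)).2 = (sq2 a b u v m).1 * (sq2 a b u v n).2
        + (sq2 a b u v m).2 * (sq2 a b u v n).1 + v * (sq2 a b u v m).2 * (sq2 a b u v n).2 := by
  induction n with
  | zero => simp [sq2]
  | succ n ih =>
    obtain ⟨ih1, ih2⟩ := ih
    rw [show m + (n+1) = (m+n)+1 from rfl]
    constructor <;> · simp only [sq2, ih1, ih2]; ring

private lemma sq2_one (a b u v : ℤ) : sq2 a b u v 1 = (a, b) := by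
  simp [sq2]

private lemma sq2_main (a b u v : ℤ) (t' : ℕ) (ha : Odd a)
    (c0 : ℤ) (hc0 : Odd c0) (hb : b = 2^(t'+2) * c0) :
    ∀ n, 1 ≤ n →
      Odd (sq2 a b u v n).1 ∧
      (∃ c, Odd c ∧ (sq2 a b u v n).2 = 2^(padicValNat 2 n + (t'+2)) * c) ∧
      (∃ z, (sq2 a b u v n).1 - a^n = 2^(padicValNat 2 n + 2*t'+3) * z) := by
  intro n
  induction n using Nat.strong_induction_on with
  | _ n IH =>
    intro hn
    rcases Nat.even_or_odd n with hne | hno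
    · obtain ⟨m, rfl⟩ := hne
      have hm : 1 ≤ m := by omega
      obtain ⟨hA, ⟨c, hc, hB⟩, ⟨z, hz⟩⟩ := IH m (by omega) hm
      set A := (sq2 a b u v m).1 with hAdef
      set B := (sq2 a b u v m).2 with hBdef
      set vm := padicValNat 2 m with hvm
      have hv : padicValNat 2 (m + m) = vm + 1 := by
        rw [show m + m = 2 * m from by ring, val2_two_mul (by omega)]
      obtain ⟨h1, h2⟩ := sq2_add a b u v m m
      rw [← hAdef, ← hBdef] at h1 h2
      have hEB : Even B := by
        rw [hB]
        exact ⟨2^(vm + (t'+1)) * c, by ring⟩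
      refine ⟨?_, ⟨c * (A + v * 2^(vm+t'+1) * c), ?_, ?_⟩,
          ⟨z * a^m + 2^(vm+2*t'+2) * z^2 + u * 2^vm * c^2, ?_⟩⟩
      · rw [h1]
        obtain ⟨d, hd⟩ := hEB
        exact Odd.add_even (hA.mul hA) ⟨u * d * B, by rw [hd]; ring⟩
      · exact hc.mul (Odd.add_even hA ⟨v * 2^(vm+t') * c, by ring⟩)
      · rw [h2, hB, hv, show vm + 1 + (t'+2) = vm+t'+1+1+1 from by omega,
          show vm + (t'+2) = vm+t'+1+1 from by omega]
        ring
      · rw [h1, hB, hv, pow_add a m m,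
          show vm + 1 + 2*t'+3 = vm+2*t'+4 from by omega]
        have hA' : A = a^m + 2^(vm+2*t'+3) * z := by linarith
        rw [hA']
        ring
    · rcases eq_or_lt_of_le hn with h1 | h1
      · rw [← h1]
        rw [sq2_one]
        have hv1 : padicValNat 2 1 = 0 := padicValNat.one
        refine ⟨ha, ⟨c0, hc0, ?_⟩, ⟨0, by ring⟩⟩
        rw [hv1, hb]; norm_num
      · obtain ⟨m, rfl⟩ : ∃ m, n = m + 1 := ⟨n - 1, by omega⟩
        have hmeven : Even m := by
          rcases Nat.even_or_odd m with h | h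
          · exact h
          · exfalso; rw [Nat.odd_iff] at *; omega
        have hm : 1 ≤ m := by omega
        obtain ⟨hA, ⟨c, hc, hB⟩, ⟨z, hz⟩⟩ := IH m (by omega) hm
        set A := (sq2 a b u v m).1 with hAdef
        set B := (sq2 a b u v m).2 with hBdef
        set vm := padicValNat 2 m with hvm
        obtain ⟨vm', hvm'⟩ : ∃ vm', vm = vm' + 1 := by
          refine ⟨vm - 1, ?_⟩
          have : padicValNat 2 m ≠ 0 := by
            intro h0
            obtain ⟨j, hj⟩ := hmeven
            have := val2_two_mul (m := j) (by omega)
            rw [show 2*j = m from by omega] at this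
            omega
          omega
        have hv : padicValNat 2 (m+1) = 0 :=
          val2_odd (by rw [Nat.odd_iff] at *; obtain ⟨j,hj⟩ := hmeven; omega)
        obtain ⟨h1', h2'⟩ := sq2_add a b u v m 1
        rw [← hAdef, ← hBdef, sq2_one] at h1' h2'
        refine ⟨?_, ⟨A * c0 + 2^vm * c * a + v * 2^(vm+t'+2) * c * c0, ?_, ?_⟩,
            ⟨a * 2^vm * z + u * 2^(vm+1) * c * c0, ?_⟩⟩
        · rw [h1', hB, hb]
          exact Odd.add_even (hA.mul ha) ⟨u * 2^(vm + (t'+2) + (t'+1)) * c * c0, by ring⟩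
        · refine Odd.add_even (Odd.add_even (hA.mul hc0)
            ⟨2^vm' * c * a, by rw [hvm']; ring⟩) ?_
          exact ⟨v * 2^(vm+t'+1) * c * c0, by ring⟩
        · rw [h2', hB, hb, hv]
          ring
        · rw [h1', hB, hb, hv]
          have hA' : A = a^m + 2^(vm+2*t'+3) * z := by linarith
          rw [hA', pow_succ]
          ring

theorem stmt_15 {R : Type*} [CommRing R] (δ : R) (u v : ℤ)
    (h2 : δ ^ 2 = (u : R) + (v : R) * δ)
    (hindep : ∀ m n m_ n_ : ℤ, (m : R) + (n : R) * δ = (m_ : R) + (n_ : R) * δ → m = m_ ∧ n = n_)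
    (a b g : ℤ) (hg2 : (2 : ℤ) ∣ g) (hgb : g ∣ b) (ha : Odd a) (hb : b ≠ 0)
    (ht : 2 ≤ padicValInt 2 b)
    (e : ℕ) (he : e = orderOf (a : ZMod 4)) (hae : a ^ e ≠ 1)
    (k : ℕ) (hk : 0 < k)
    (a_k b_k : ℤ) (hpow : ((a : R) + (b : R) * δ) ^ k = (a_k : R) + (b_k : R) * δ)
    (hak : a_k ≠ 1) (hbk : b_k ≠ 0) :
    padicValInt 2 (a_k - 1) > padicValInt 2 b_k - padicValInt 2 g ↔
      ((e ∣ k ∧ padicValInt 2 (a ^ e - 1) - padicValNat 2 e > padicValInt 2 b - padicValInt 2 g)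
        ∨ (padicValNat 2 k = 0 ∧ padicValInt 2 (b / g) = 0)) := by
  classical
  -- link a_k, b_k to sq2
  have hspec := sq2_spec δ u v h2 a b k
  rw [hpow] at hspec
  obtain ⟨hak_eq, hbk_eq⟩ := hindep a_k b_k _ _ hspec
  -- odd part of b
  obtain ⟨t', ht'⟩ : ∃ t', padicValInt 2 b = t' + 2 := ⟨padicValInt 2 b - 2, by omega⟩
  obtain ⟨c0, hc0, hb0⟩ := exists_odd_part b hb
  rw [ht'] at hb0
  obtain ⟨hAodd, ⟨c, hc, hB⟩, ⟨z, hz⟩⟩ := sq2_main a b u v t' ha c0 hc0 hb0 k hk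
  rw [← hak_eq] at hAodd hz
  rw [← hbk_eq] at hB
  set vk := padicValNat 2 k with hvk
  have hvbk : padicValInt 2 b_k = vk + (t'+2) := (val2_of_eq hc hB).1
  -- g facts
  have hg0 : g ≠ 0 := by rintro rfl; exact hb (by simpa using hgb)
  have hbg0 : b / g ≠ 0 := by
    intro h0; apply hb
    rw [← Int.ediv_mul_cancel hgb, h0, zero_mul]
  have hmul : padicValInt 2 b = padicValInt 2 (b/g) + padicValInt 2 g := by
    conv_lhs => rw [← Int.ediv_mul_cancel hgb]
    rw [padicValInt.mul hbg0 hg0]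
  have hγ1 : 1 ≤ padicValInt 2 g := ge_val_of_dvd hg0 (by rw [pow_one]; exact hg2)
  set γ := padicValInt 2 g with hγ
  set β := padicValInt 2 (b/g) with hβ
  have hak0 : a_k - 1 ≠ 0 := sub_ne_zero.mpr hak
  -- case on a mod 4
  have ha2 := Int.odd_iff.mp ha
  have h4 : a % 4 = 1 ∨ a % 4 = 3 := by omega
  rcases h4 with ha4 | ha4
  · -- a ≡ 1 mod 4, e = 1
    have he1 : e = 1 := by
      rw [he, int_cast_zmod4 1 ha4]
      norm_num
    have ha1 : a ≠ 1 := by rw [he1, pow_one] at hae; exact hae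
    have hsub0 : a - 1 ≠ 0 := sub_ne_zero.mpr ha1
    have hV2 : 2 ≤ padicValInt 2 (a-1) := by
      apply ge_val_of_dvd hsub0
      rw [show ((2:ℤ)^2) = 4 from by norm_num]
      exact ⟨(a-1)/4, by omega⟩
    obtain ⟨d, hd, hda⟩ := exists_odd_part (a-1) hsub0
    set V := padicValInt 2 (a-1) with hV
    obtain ⟨ck, hck, hk1⟩ := pow_one_lte a d V hd hV2 hda k hk
    have hx : a_k - 1 = 2^(V+vk) * ck + 2^(vk+2*t'+3) * z := by linarith [hk1, hz]
    rw [hvbk, ht', he1, pow_one]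
    simp only [padicValNat.one, Nat.sub_zero, one_dvd, true_and]
    by_cases hcase : (t'+2) - γ < V
    · have hlow : vk + (t'+2) - γ < padicValInt 2 (a_k-1) := by
        rcases le_or_gt (vk+2*t'+3) (V+vk) with hcmp | hcmp
        · have hdvd : (2:ℤ)^(vk+2*t'+3) ∣ a_k - 1 := by
            rw [hx]
            exact dvd_add (Dvd.dvd.mul_right (pow_dvd_pow 2 hcmp) ck)
              (Dvd.dvd.mul_right dvd_rfl z)
          have := ge_val_of_dvd hak0 hdvd
          omega
        · have := val_combine hck hx hcmp
          omega
      exact ⟨fun _ => Or.inl (by omega), fun _ => hlow⟩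
    · have hcmp : V + vk < vk + 2*t'+3 := by omega
      have heq := val_combine hck hx hcmp
      constructor
      · intro hgt; omega
      · rintro (hgt | ⟨hvk0, hβ0⟩) <;> omega
  · -- a ≡ 3 mod 4, e = 2
    have he2 : e = 2 := by
      rw [he, int_cast_zmod4 3 ha4, show ((3:ℤ) : ZMod 4) = (3 : ZMod 4) from by norm_cast,
        order3]
    have ha21 : a^2 ≠ 1 := by rw [he2] at hae; exact hae
    have hsub0 : a^2 - 1 ≠ 0 := sub_ne_zero.mpr ha21
    have h8 : (2:ℤ)^3 ∣ a^2 - 1 := by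
      obtain ⟨j, hj⟩ := ha
      obtain ⟨dd, hdd⟩ := Int.even_mul_succ_self j
      exact ⟨dd, by rw [hj]; linear_combination 4*hdd⟩
    have hV2 : 3 ≤ padicValInt 2 (a^2-1) := ge_val_of_dvd hsub0 h8
    obtain ⟨d2, hd2, hda2⟩ := exists_odd_part (a^2-1) hsub0
    set V₂ := padicValInt 2 (a^2-1) with hV₂
    have hv22 : padicValNat 2 2 = 1 := padicValNat.self (by norm_num)
    rw [hvbk, ht', he2, hv22]
    rcases Nat.even_or_odd k with hke | hko
    · -- k even
      obtain ⟨m, rfl⟩ := hke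
      have hm : 1 ≤ m := by omega
      have hvkm : vk = padicValNat 2 m + 1 := by
        rw [hvk, show m + m = 2*m from by ring, val2_two_mul (by omega)]
      obtain ⟨ck, hck, hk1⟩ := pow_one_lte (a^2) d2 V₂ hd2 (by omega) hda2 m hm
      have hk1' : a^(m+m) - 1 = 2^(V₂ + padicValNat 2 m) * ck := by
        rw [show m + m = 2*m from by ring, pow_mul]; exact hk1
      have hx : a_k - 1 = 2^(V₂ + padicValNat 2 m) * ck + 2^(vk+2*t'+3) * z := by
        linarith [hk1', hz]
      have hdvd2 : 2 ∣ m + m := ⟨m, by ring⟩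
      by_cases hcase : (t'+2) - γ < V₂ - 1
      · have hlow : vk + (t'+2) - γ < padicValInt 2 (a_k-1) := by
          rcases le_or_gt (vk+2*t'+3) (V₂ + padicValNat 2 m) with hcmp | hcmp
          · have hdvd : (2:ℤ)^(vk+2*t'+3) ∣ a_k - 1 := by
              rw [hx]
              exact dvd_add (Dvd.dvd.mul_right (pow_dvd_pow 2 hcmp) ck)
                (Dvd.dvd.mul_right dvd_rfl z)
            have := ge_val_of_dvd hak0 hdvd
            omega
          · have := val_combine hck hx hcmp
            omega
        exact ⟨fun _ => Or.inl ⟨hdvd2, by omega⟩, fun _ => hlow⟩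
      · have hcmp : V₂ + padicValNat 2 m < vk + 2*t'+3 := by omega
        have heq := val_combine hck hx hcmp
        constructor
        · intro hgt; omega
        · rintro (⟨_, hgt⟩ | ⟨hvk0, hβ0⟩) <;> omega
    · -- k odd
      have hvk0 : vk = 0 := val2_odd hko
      have hnd : ¬ (2 ∣ k) := by
        rintro ⟨j, hj⟩
        rw [Nat.odd_iff] at hko
        omega
      have hw : a - 1 = 2 * ((a-1)/2) := by omega
      have hwo : Odd ((a-1)/2) := by rw [Int.odd_iff]; omega
      have hgs := geom_sum_mul (a : ℤ) k
      have hk1 : a^k - 1 = 2^1 * (((a-1)/2) * (∑ i ∈ Finset.range k, a ^ i)) := by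
        rw [← hgs]
        conv_lhs => rw [hw]
        ring
      have hx : a_k - 1 = 2^1 * (((a-1)/2) * (∑ i ∈ Finset.range k, a ^ i))
          + 2^(vk+2*t'+3) * z := by linarith [hk1, hz]
      have heq := val_combine (hwo.mul (odd_geom_sum ha hko)) hx (by omega)
      constructor
      · intro hgt
        exact Or.inr ⟨hvk0, by omega⟩
      · rintro (⟨hdvd, _⟩ | ⟨_, hβ0⟩)
        · exact absurd hdvd hnd
        · omega
end
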